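/- Let x, y, z be real numbers with 0 < z < y < x and x + y ≤ 2. Then (z − x) arccos((x + z)/2) + (x − y) arccos((x + y)/2) + (y − z) arccos((y + z)/2) < 0. -/

import Mathlib

/-!
The three arguments `(y + z)/2 < (x + z)/2 < (x + y)/2` lie in `[0, 1]`, where `arccos` is
strictly concave because its derivative `-1/√(1 - t²)` is strictly decreasing there. The middle
point splits the outer interval in the ratio `(x - y) : (y - z)`, so the claim is exactly the
three-point form of strict concavity, scaled by `2`.
-/

open Real Set

theorem strictConcaveOn_arccos : StrictConcaveOn ℝ (Icc 0 1) arccos := by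
  refine StrictAntiOn.strictConcaveOn_of_deriv (convex_Icc 0 1) continuous_arccos.continuousOn ?_
  rw [interior_Icc, deriv_arccos]
  intro a ⟨ha₀, _⟩ b ⟨_, hb₁⟩ hab
  have hb : 0 < 1 - b ^ 2 := by nlinarith
  have hsqrt : √(1 - b ^ 2) < √(1 - a ^ 2) := sqrt_lt_sqrt hb.le (by nlinarith)
  simpa using one_div_lt_one_div_of_lt (sqrt_pos.mpr hb) hsqrt

theorem StrictConcaveOn.sub_mul_add_sub_mul_lt {𝕜 : Type*} [Field 𝕜] [LinearOrder 𝕜]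
    [IsStrictOrderedRing 𝕜] {s : Set 𝕜} {f : 𝕜 → 𝕜} (hf : StrictConcaveOn 𝕜 s f) {p q r : 𝕜}
    (hp : p ∈ s) (hr : r ∈ s) (hpq : p < q) (hqr : q < r) :
    (r - q) * f p + (q - p) * f r < (r - p) * f q := by
  have hslope := hf.slope_anti_adjacent hp hr hpq hqr
  rw [div_lt_div_iff₀ (sub_pos.2 hqr) (sub_pos.2 hpq)] at hslope
  linarith

theorem merging_inequality (x y z : ℝ) (hz : 0 < z) (hzy : z < y) (hyx : y < x)
    (hxy : x + y ≤ 2) :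
    (z - x) * Real.arccos ((x + z) / 2) + (x - y) * Real.arccos ((x + y) / 2)
      + (y - z) * Real.arccos ((y + z) / 2) < 0 := by
  have key := strictConcaveOn_arccos.sub_mul_add_sub_mul_lt
    (p := (y + z) / 2) (q := (x + z) / 2) (r := (x + y) / 2)
    ⟨by linarith, by linarith⟩ ⟨by linarith, by linarith⟩ (by linarith) (by linarith)
  linarith
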